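/- arXiv:2205.00927 — 3 statements merged into one kernel-verified Lean document; each statement's English description precedes it below -/
import Mathlib

section
/- Let f(κ) = H_k(κ)^{1/k} with 1 ≤ k ≤ n−1. For κ ∈ Γ̃_k and any fixed index i, one has f(κ) − (∂f/∂κ_i)(κ)·κ_i = H_k^{1/k} · ((k−1)σ_k(κ) + σ_k(κ|i))/(k·σ_k(κ)) > 0. -/
/-!
Since `σ_k` is affine in each variable, `σ_k(κ) = σ_k(κ|i) + κ_i ∂σ_k/∂κ_i`, and the chain rule gives
`∂f/∂κ_i = (f / k) · (∂σ_k/∂κ_i) / σ_k`; the identity is then pure algebra. Its right-hand side is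
positive because `(k - 1) σ_k + σ_k(κ|i) > 0` is the defining condition of `Γ̃_k`, and `σ_k > 0`
follows by summing that condition over `i`, using `∑ᵢ σ_k(κ|i) = (n - k) σ_k`.
-/

open Real

/-- The k-th elementary symmetric polynomial of `κ : Fin n → ℝ`. -/
noncomputable def esymm (n k : ℕ) (κ : Fin n → ℝ) : ℝ :=
  ∑ s ∈ Finset.powersetCard k (Finset.univ : Finset (Fin n)), ∏ i ∈ s, κ i

/-- The normalized k-th mean curvature `H_k = σ_k / C(n,k)`. -/
noncomputable def Hmean (n k : ℕ) (κ : Fin n → ℝ) : ℝ := esymm n k κ / (n.choose k)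

/-- The partial derivative `∂σ_k/∂κ_i`, i.e. `σ_{k-1}(κ|i)`, indexed by the `k`-subsets containing
`i`. -/
noncomputable def esymmPartial (n k : ℕ) (κ : Fin n → ℝ) (i : Fin n) : ℝ :=
  ∑ s ∈ (Finset.powersetCard k (Finset.univ : Finset (Fin n))).filter (fun s => i ∈ s),
    ∏ m ∈ s.erase i, κ m

lemma esymm_update_zero (n k : ℕ) (κ : Fin n → ℝ) (i : Fin n) :
    esymm n k (Function.update κ i 0) =
      ∑ s ∈ (Finset.powersetCard k (Finset.univ : Finset (Fin n))).filter (fun s => i ∉ s),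
        ∏ m ∈ s, κ m := by
  rw [esymm, ← Finset.sum_filter_add_sum_filter_not _ (fun s => i ∉ s)]
  have h_out : ∀ s ∈ (Finset.powersetCard k (Finset.univ : Finset (Fin n))).filter
      (fun s => i ∉ s), ∏ m ∈ s, Function.update κ i 0 m = ∏ m ∈ s, κ m := by
    intro s hs
    obtain ⟨-, hi⟩ := Finset.mem_filter.mp hs
    exact Finset.prod_congr rfl fun m hm => Function.update_of_ne (by rintro rfl; exact hi hm) _ _
  have h_in : ∀ s ∈ (Finset.powersetCard k (Finset.univ : Finset (Fin n))).filter
      (fun s => ¬ i ∉ s), ∏ m ∈ s, Function.update κ i 0 m = 0 := by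
    intro s hs
    obtain ⟨-, hi⟩ := Finset.mem_filter.mp hs
    exact Finset.prod_eq_zero (not_not.mp hi) (Function.update_self i 0 κ)
  rw [Finset.sum_congr rfl h_out, Finset.sum_congr rfl h_in, Finset.sum_const_zero, add_zero]

lemma esymm_eq_esymm_update_zero_add (n k : ℕ) (κ : Fin n → ℝ) (i : Fin n) :
    esymm n k κ = esymm n k (Function.update κ i 0) + κ i * esymmPartial n k κ i := by
  rw [esymm_update_zero, esymmPartial, Finset.mul_sum, esymm,
    ← Finset.sum_filter_add_sum_filter_not _ (fun s => i ∉ s)]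
  congr 1
  refine Finset.sum_congr (by simp) fun s hs => ?_
  exact (Finset.mul_prod_erase s κ (Finset.mem_filter.mp hs).2).symm

/-- Each `k`-subset omits exactly `n - k` indices. -/
lemma sum_esymm_update_zero (n k : ℕ) (hkn : k ≤ n) (κ : Fin n → ℝ) :
    ∑ j, esymm n k (Function.update κ j 0) = ((n : ℝ) - k) * esymm n k κ := by
  simp only [esymm_update_zero, Finset.sum_filter]
  rw [Finset.sum_comm, esymm, Finset.mul_sum]
  refine Finset.sum_congr rfl fun s hs => ?_
  rw [← Finset.sum_filter, Finset.sum_const, nsmul_eq_mul]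
  have h_compl : Finset.univ.filter (fun j : Fin n => j ∉ s) = sᶜ := by
    ext j; simp
  rw [h_compl, Finset.card_compl, (Finset.mem_powersetCard.mp hs).2, Fintype.card_fin,
    Nat.cast_sub hkn, mul_comm]

lemma esymm_pos (n k : ℕ) (hn : 0 < n) (hkn : k ≤ n) (κ : Fin n → ℝ)
    (hκ : ∀ j : Fin n, -(((k : ℝ) - 1) * esymm n k κ) < esymm n k (Function.update κ j 0)) :
    0 < esymm n k κ := by
  have : Nonempty (Fin n) := ⟨⟨0, hn⟩⟩
  have h_sum := Finset.sum_lt_sum_of_nonempty Finset.univ_nonempty (fun j _ => hκ j)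
  rw [sum_esymm_update_zero n k hkn κ, Finset.sum_const, Finset.card_univ, Fintype.card_fin,
    nsmul_eq_mul] at h_sum
  have h_coeff : (0 : ℝ) ≤ k * (n - 1) :=
    mul_nonneg k.cast_nonneg (sub_nonneg.mpr (by exact_mod_cast hn))
  exact pos_of_mul_pos_right (by linarith) h_coeff

lemma hasFDerivAt_esymm (n k : ℕ) (κ : Fin n → ℝ) :
    HasFDerivAt (esymm n k)
      (∑ j, esymmPartial n k κ j • ContinuousLinearMap.proj (R := ℝ) (φ := fun _ : Fin n => ℝ) j)
      κ := by
  have h : HasFDerivAt (fun x : Fin n → ℝ => ∑ s ∈ Finset.powersetCard k Finset.univ, ∏ m ∈ s, x m)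
      (∑ s ∈ Finset.powersetCard k Finset.univ, ∑ m ∈ s,
        (∏ j ∈ s.erase m, κ j) • ContinuousLinearMap.proj (R := ℝ) (φ := fun _ : Fin n => ℝ) m) κ :=
    HasFDerivAt.fun_sum fun s _ => HasFDerivAt.finsetProd fun m _ => hasFDerivAt_apply m κ
  refine h.congr_fderiv ?_
  simp only [esymmPartial, Finset.sum_smul]
  exact Finset.sum_comm' fun s m => by simp [and_comm]

lemma fderiv_Hmean_rpow_single (n k : ℕ) (p : ℝ) (κ : Fin n → ℝ) (i : Fin n)
    (hH : Hmean n k κ ≠ 0) :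
    fderiv ℝ (fun x => Hmean n k x ^ p) κ (Pi.single i 1)
      = p * Hmean n k κ ^ p * (esymmPartial n k κ i / esymm n k κ) := by
  have hHmean : HasFDerivAt (fun x => Hmean n k x)
      ((n.choose k : ℝ)⁻¹ • ∑ j, esymmPartial n k κ j •
        ContinuousLinearMap.proj (R := ℝ) (φ := fun _ : Fin n => ℝ) j) κ := by
    simpa only [Hmean, div_eq_mul_inv] using (hasFDerivAt_esymm n k κ).mul_const _
  rw [(hHmean.rpow_const (p := p) (Or.inl hH)).fderiv]
  obtain ⟨hσ, hC⟩ := div_ne_zero_iff.mp hH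
  simp only [rpow_sub_one hH, smul_apply, sum_apply,
    ContinuousLinearMap.proj_apply, Pi.single_apply, smul_eq_mul, mul_ite, mul_one, mul_zero,
    Finset.sum_ite_eq', Finset.mem_univ, ↓reduceIte]
  rw [Hmean]
  field_simp

lemma Hmean_rpow_sub_fderiv_mul_eq (n k : ℕ) (hk : k ≠ 0) (κ : Fin n → ℝ) (i : Fin n)
    (hH : Hmean n k κ ≠ 0) :
    (Hmean n k κ) ^ ((1 : ℝ) / k)
        - fderiv ℝ (fun x => (Hmean n k x) ^ ((1 : ℝ) / k)) κ (Pi.single i 1) * κ i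
      = (Hmean n k κ) ^ ((1 : ℝ) / k)
          * ((((k : ℝ) - 1) * esymm n k κ + esymm n k (Function.update κ i 0))
              / ((k : ℝ) * esymm n k κ)) := by
  have hσ : esymm n k κ ≠ 0 := (div_ne_zero_iff.mp hH).1
  have hk' : (k : ℝ) ≠ 0 := Nat.cast_ne_zero.mpr hk
  rw [fderiv_Hmean_rpow_single n k _ κ i hH]
  field_simp
  linear_combination (Hmean n k κ) ^ ((1 : ℝ) / k) * esymm_eq_esymm_update_zero_add n k κ i

theorem stmt_6_general (n k : ℕ) (hk1 : 1 ≤ k) (hkn : k ≤ n - 1) (κ : Fin n → ℝ)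
    (h2 : ∀ j : Fin n,
      -(((k : ℝ) - 1) * esymm n k κ) < esymm n k (Function.update κ j 0))
    (i : Fin n) :
    (Hmean n k κ) ^ ((1 : ℝ) / k)
        - fderiv ℝ (fun x => (Hmean n k x) ^ ((1 : ℝ) / k)) κ (Pi.single i 1) * κ i
      = (Hmean n k κ) ^ ((1 : ℝ) / k)
          * ((((k : ℝ) - 1) * esymm n k κ + esymm n k (Function.update κ i 0))
              / ((k : ℝ) * esymm n k κ)) ∧
    0 < (Hmean n k κ) ^ ((1 : ℝ) / k)
        - fderiv ℝ (fun x => (Hmean n k x) ^ ((1 : ℝ) / k)) κ (Pi.single i 1) * κ i := by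
  have hσ : 0 < esymm n k κ := esymm_pos n k (by omega) (by omega) κ h2
  have hH : 0 < Hmean n k κ := div_pos hσ (by exact_mod_cast Nat.choose_pos (by omega))
  have key := Hmean_rpow_sub_fderiv_mul_eq n k (by omega) κ i hH.ne'
  refine ⟨key, key ▸ mul_pos (rpow_pos_of_pos hH _) (div_pos ?_ (mul_pos (by exact_mod_cast hk1) hσ))⟩
  linarith [h2 i]

theorem stmt_6 (n k : ℕ) (hk1 : 1 ≤ k) (hkn : k ≤ n - 1) (κ : Fin n → ℝ)
    (h1 : ∀ m, 1 ≤ m → m ≤ k - 1 → 0 < esymm n m κ)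
    (h2 : ∀ j : Fin n,
      -(((k : ℝ) - 1) * esymm n k κ) < esymm n k (Function.update κ j 0))
    (i : Fin n) :
    (Hmean n k κ) ^ ((1 : ℝ) / k)
        - fderiv ℝ (fun x => (Hmean n k x) ^ ((1 : ℝ) / k)) κ (Pi.single i 1) * κ i
      = (Hmean n k κ) ^ ((1 : ℝ) / k)
          * ((((k : ℝ) - 1) * esymm n k κ + esymm n k (Function.update κ i 0))
              / ((k : ℝ) * esymm n k κ)) ∧
    0 < (Hmean n k κ) ^ ((1 : ℝ) / k)
        - fderiv ℝ (fun x => (Hmean n k x) ^ ((1 : ℝ) / k)) κ (Pi.single i 1) * κ i :=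
  stmt_6_general n k hk1 hkn κ h2 i
end

section
/- For n = 3, k = 2, the point κ = (−1/2, 1, 3/2) lies in the Gårding cone Γ₂ (i.e., σ₁(κ) > 0 and σ₂(κ) > 0), but for f = H₂^{1/2} one has f(κ) − (∂f/∂κ₃)(κ)·κ₃ < 0. -/
open Real

/-!
Where `H₂ > 0`, the chain rule for the square root gives `∂f/∂κ₃ = (κ₁ + κ₂) / (6 f)`, so
`f - κ₃ ∂f/∂κ₃ = (2 κ₁ κ₂ + κ₃ (κ₁ + κ₂)) / (6 f)`. At `κ = (-1/2, 1, 3/2)` we have `H₂ = 1/12 > 0`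
but the numerator is `-1 + 3/4 < 0`. Coordinates are 0-indexed: `κᵢ` is `κ (i - 1)`.
-/

lemma esymm_three_one (x : Fin 3 → ℝ) : esymm 3 1 x = x 0 + x 1 + x 2 := by
  simp [esymm, Finset.powersetCard_one, Fin.sum_univ_three]

lemma esymm_three_two (x : Fin 3 → ℝ) : esymm 3 2 x = x 0 * x 1 + x 0 * x 2 + x 1 * x 2 := by
  rw [esymm, show Finset.powersetCard 2 (Finset.univ : Finset (Fin 3)) = {{0, 1}, {0, 2}, {1, 2}}
    by decide, Finset.sum_insert (by decide), Finset.sum_pair (by decide)]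
  simp [add_assoc]

lemma Hmean_three_two (x : Fin 3 → ℝ) : Hmean 3 2 x = (x 0 * x 1 + x 0 * x 2 + x 1 * x 2) / 3 := by
  simp [Hmean, esymm_three_two, Nat.choose]

lemma hasFDerivAt_Hmean_three_two (κ : Fin 3 → ℝ) :
    HasFDerivAt (Hmean 3 2)
      ((3 : ℝ)⁻¹ • ((κ 1 + κ 2) • .proj 0 + (κ 0 + κ 2) • .proj 1 + (κ 0 + κ 1) • .proj 2 :
        (Fin 3 → ℝ) →L[ℝ] ℝ)) κ := by
  have hx (i : Fin 3) :
      HasFDerivAt (fun x : Fin 3 → ℝ => x i) (.proj (R := ℝ) (φ := fun _ => ℝ) i) κ :=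
    hasFDerivAt_apply i κ
  have hσ := ((((hx 0).mul (hx 1)).add ((hx 0).mul (hx 2))).add ((hx 1).mul (hx 2))).const_smul
    (3 : ℝ)⁻¹
  rw [show Hmean 3 2 = _ from funext Hmean_three_two]
  refine (hσ.congr_fderiv ?_).congr_of_eventuallyEq ?_
  · ext v; simp; ring
  · filter_upwards with x; simp [div_eq_inv_mul]

lemma fderiv_sqrt_Hmean_three_two_single_two {κ : Fin 3 → ℝ} (hκ : 0 < Hmean 3 2 κ) :
    fderiv ℝ (fun x => Hmean 3 2 x ^ ((1 : ℝ) / 2)) κ (Pi.single 2 1)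
      = (κ 0 + κ 1) / (6 * √(Hmean 3 2 κ)) := by
  simp only [← sqrt_eq_rpow]
  rw [((hasFDerivAt_Hmean_three_two κ).sqrt hκ.ne').fderiv]
  simp only [smul_apply, add_apply,
    ContinuousLinearMap.proj_apply, Pi.single_eq_same, ne_eq, Fin.reduceEq, not_false_eq_true,
    Pi.single_eq_of_ne, smul_eq_mul]
  field_simp
  ring

lemma sqrt_Hmean_three_two_sub_fderiv_mul {κ : Fin 3 → ℝ} (hκ : 0 < Hmean 3 2 κ) :
    Hmean 3 2 κ ^ ((1 : ℝ) / 2)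
        - fderiv ℝ (fun x => Hmean 3 2 x ^ ((1 : ℝ) / 2)) κ (Pi.single 2 1) * κ 2
      = (2 * κ 0 * κ 1 + κ 2 * (κ 0 + κ 1)) / (6 * √(Hmean 3 2 κ)) := by
  have hsq : √(Hmean 3 2 κ) ^ 2 = Hmean 3 2 κ := sq_sqrt hκ.le
  rw [fderiv_sqrt_Hmean_three_two_single_two hκ, ← sqrt_eq_rpow]
  field_simp
  rw [hsq, Hmean_three_two]
  ring

theorem stmt_7 :
    let κ : Fin 3 → ℝ := ![-1/2, 1, 3/2]
    0 < esymm 3 1 κ ∧ 0 < esymm 3 2 κ ∧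
    (Hmean 3 2 κ) ^ ((1 : ℝ) / 2)
        - fderiv ℝ (fun x => (Hmean 3 2 x) ^ ((1 : ℝ) / 2)) κ (Pi.single 2 1) * κ 2 < 0 := by
  intro κ
  obtain ⟨h0, h1, h2⟩ : κ 0 = -1 / 2 ∧ κ 1 = 1 ∧ κ 2 = 3 / 2 := ⟨rfl, rfl, rfl⟩
  have hH : Hmean 3 2 κ = 1 / 12 := by norm_num [Hmean_three_two, h0, h1, h2]
  refine ⟨by norm_num [esymm_three_one, h0, h1, h2], by norm_num [esymm_three_two, h0, h1, h2], ?_⟩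
  rw [sqrt_Hmean_three_two_sub_fderiv_mul (by rw [hH]; norm_num), hH]
  exact div_neg_of_neg_of_pos (by rw [h0, h1, h2]; norm_num) (by positivity)
end

section
/- Suppose f₁, f₂ : Γ → ℝ are smooth, positive, 1-homogeneous symmetric functions on an open convex symmetric cone Γ ⊇ Γ₊, each satisfying: Σ_i ∂f/∂κ_i ≥ 1, Σ_i (∂f/∂κ_i)κ_i² ≥ f², ∂f/∂κ_i > 0, and f − (∂f/∂κ_i)κ_i ≥ 0 for each i. Then for every λ ∈ (0,1), the geometric mean f̃ = f₁^λ f₂^{1−λ} also satisfies all four properties on Γ. In particular Σ_i ∂f̃/∂κ_i ≥ λ(f₂/f₁)^{1−λ} + (1−λ)(f₁/f₂)^λ ≥ 1 and Σ_i (∂f̃/∂κ_i)κ_i² ≥ f̃·(λf₁ + (1−λ)f₂) ≥ f̃² by Young's inequality. -/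
open Real

/-- An open convex cone in `ℝⁿ`, symmetric under permutations of coordinates and
containing the positive cone. -/
def GoodCone (n : ℕ) (Γ : Set (Fin n → ℝ)) : Prop :=
  IsOpen Γ ∧ Convex ℝ Γ ∧ (∀ s : ℝ, 0 < s → ∀ κ ∈ Γ, s • κ ∈ Γ) ∧
  (∀ σ : Equiv.Perm (Fin n), ∀ κ ∈ Γ, κ ∘ σ ∈ Γ) ∧
  {κ : Fin n → ℝ | ∀ i, 0 < κ i} ⊆ Γ

/-- A smooth, positive, symmetric, 1-homogeneous speed function on `Γ` satisfying
the four properties: `Σᵢ ∂f/∂κᵢ ≥ 1`, `Σᵢ (∂f/∂κᵢ)κᵢ² ≥ f²`, `∂f/∂κᵢ > 0`,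
and `f − (∂f/∂κᵢ)κᵢ ≥ 0`. -/
def SpeedCond (n : ℕ) (Γ : Set (Fin n → ℝ)) (f : (Fin n → ℝ) → ℝ) : Prop :=
  ContDiffOn ℝ (⊤ : ℕ∞) f Γ ∧ (∀ κ ∈ Γ, 0 < f κ) ∧
  (∀ s : ℝ, 0 < s → ∀ κ ∈ Γ, f (s • κ) = s * f κ) ∧
  (∀ σ : Equiv.Perm (Fin n), ∀ κ ∈ Γ, f (κ ∘ σ) = f κ) ∧
  (∀ κ ∈ Γ, 1 ≤ ∑ i : Fin n, fderiv ℝ f κ (Pi.single i 1)) ∧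
  (∀ κ ∈ Γ, (f κ) ^ 2 ≤ ∑ i : Fin n, fderiv ℝ f κ (Pi.single i 1) * (κ i) ^ 2) ∧
  (∀ κ ∈ Γ, ∀ i : Fin n, 0 < fderiv ℝ f κ (Pi.single i 1)) ∧
  (∀ κ ∈ Γ, ∀ i : Fin n, 0 ≤ f κ - fderiv ℝ f κ (Pi.single i 1) * κ i)

lemma aux_fderiv_gm {n : ℕ} {Γ : Set (Fin n → ℝ)} (hopen : IsOpen Γ)
    {f₁ f₂ : (Fin n → ℝ) → ℝ} (hf₁ : ContDiffOn ℝ (⊤ : ℕ∞) f₁ Γ) (hf₂ : ContDiffOn ℝ (⊤ : ℕ∞) f₂ Γ)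
    {κ : Fin n → ℝ} (hκ : κ ∈ Γ) (ha : 0 < f₁ κ) (hb : 0 < f₂ κ) (l : ℝ) :
    fderiv ℝ (fun x => f₁ x ^ l * f₂ x ^ (1 - l)) κ =
      (l * (f₁ κ ^ l * f₂ κ ^ (1 - l)) / f₁ κ) • fderiv ℝ f₁ κ
      + ((1 - l) * (f₁ κ ^ l * f₂ κ ^ (1 - l)) / f₂ κ) • fderiv ℝ f₂ κ := by
  have hd₁ : HasFDerivAt f₁ (fderiv ℝ f₁ κ) κ :=
    ((hf₁.contDiffAt (hopen.mem_nhds hκ)).differentiableAt (by simp)).hasFDerivAt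
  have hd₂ : HasFDerivAt f₂ (fderiv ℝ f₂ κ) κ :=
    ((hf₂.contDiffAt (hopen.mem_nhds hκ)).differentiableAt (by simp)).hasFDerivAt
  have H : HasFDerivAt (fun x => f₁ x ^ l * f₂ x ^ (1 - l)) _ κ := (hd₁.rpow_const (p := l) (Or.inl ha.ne')).mul (hd₂.rpow_const (p := 1 - l) (Or.inl hb.ne'))
  rw [H.fderiv, smul_smul, smul_smul]
  have e1 : f₁ κ ^ (l - 1) = f₁ κ ^ l / f₁ κ := by
    rw [Real.rpow_sub ha, Real.rpow_one]
  have e2 : f₂ κ ^ (1 - l - 1) = f₂ κ ^ (1 - l) / f₂ κ := by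
    rw [Real.rpow_sub hb, Real.rpow_one]
  rw [e1, e2, add_comm]
  congr 1
  · congr 1; ring
  · congr 1; ring

theorem stmt_13 (n : ℕ) (Γ : Set (Fin n → ℝ)) (hΓ : GoodCone n Γ)
    (f₁ f₂ : (Fin n → ℝ) → ℝ)
    (h₁ : SpeedCond n Γ f₁) (h₂ : SpeedCond n Γ f₂)
    (l : ℝ) (hl : l ∈ Set.Ioo (0 : ℝ) 1) :
    SpeedCond n Γ (fun κ => f₁ κ ^ l * f₂ κ ^ (1 - l)) ∧
    (∀ κ ∈ Γ,
      l * (f₂ κ / f₁ κ) ^ (1 - l) + (1 - l) * (f₁ κ / f₂ κ) ^ l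
          ≤ ∑ i : Fin n,
              fderiv ℝ (fun x => f₁ x ^ l * f₂ x ^ (1 - l)) κ (Pi.single i 1) ∧
      1 ≤ l * (f₂ κ / f₁ κ) ^ (1 - l) + (1 - l) * (f₁ κ / f₂ κ) ^ l) ∧
    ∀ κ ∈ Γ,
      f₁ κ ^ l * f₂ κ ^ (1 - l) * (l * f₁ κ + (1 - l) * f₂ κ)
          ≤ ∑ i : Fin n,
              fderiv ℝ (fun x => f₁ x ^ l * f₂ x ^ (1 - l)) κ (Pi.single i 1) * (κ i) ^ 2 ∧
      (f₁ κ ^ l * f₂ κ ^ (1 - l)) ^ 2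
          ≤ f₁ κ ^ l * f₂ κ ^ (1 - l) * (l * f₁ κ + (1 - l) * f₂ κ) := by
  obtain ⟨hopen, -, -, -, -⟩ := hΓ
  obtain ⟨h1s, h1p, h1h, h1sym, h1a, h1b, h1c, h1d⟩ := h₁
  obtain ⟨h2s, h2p, h2h, h2sym, h2a, h2b, h2c, h2d⟩ := h₂
  obtain ⟨hl0, hl1⟩ := hl
  have hl1' : 0 < 1 - l := by linarith
  -- evaluation of the derivative
  have keyv : ∀ κ ∈ Γ, ∀ v : Fin n → ℝ,
      fderiv ℝ (fun x => f₁ x ^ l * f₂ x ^ (1 - l)) κ v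
        = (l * (f₁ κ ^ l * f₂ κ ^ (1 - l)) / f₁ κ) * fderiv ℝ f₁ κ v
          + ((1 - l) * (f₁ κ ^ l * f₂ κ ^ (1 - l)) / f₂ κ) * fderiv ℝ f₂ κ v := by
    intro κ hκ v
    rw [aux_fderiv_gm hopen h1s h2s hκ (h1p κ hκ) (h2p κ hκ) l]
    simp [smul_eq_mul]
  -- per-point abbreviations inside each goal
  have hcpos : ∀ κ ∈ Γ, 0 < f₁ κ ^ l * f₂ κ ^ (1 - l) := fun κ hκ =>
    mul_pos (Real.rpow_pos_of_pos (h1p κ hκ) _) (Real.rpow_pos_of_pos (h2p κ hκ) _)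
  have hc1pos : ∀ κ ∈ Γ, 0 < l * (f₁ κ ^ l * f₂ κ ^ (1 - l)) / f₁ κ := fun κ hκ =>
    div_pos (mul_pos hl0 (hcpos κ hκ)) (h1p κ hκ)
  have hc2pos : ∀ κ ∈ Γ, 0 < (1 - l) * (f₁ κ ^ l * f₂ κ ^ (1 - l)) / f₂ κ := fun κ hκ =>
    div_pos (mul_pos hl1' (hcpos κ hκ)) (h2p κ hκ)
  have id1 : ∀ κ ∈ Γ, f₁ κ ^ l * f₂ κ ^ (1 - l) / f₁ κ = (f₂ κ / f₁ κ) ^ (1 - l) := by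
    intro κ hκ
    have ha := h1p κ hκ; have hb := h2p κ hκ
    rw [Real.div_rpow hb.le ha.le, Real.rpow_sub ha, Real.rpow_one]
    have hne : f₁ κ ^ l ≠ 0 := (Real.rpow_pos_of_pos ha l).ne'
    field_simp
  have id2 : ∀ κ ∈ Γ, f₁ κ ^ l * f₂ κ ^ (1 - l) / f₂ κ = (f₁ κ / f₂ κ) ^ l := by
    intro κ hκ
    have ha := h1p κ hκ; have hb := h2p κ hκ
    rw [Real.div_rpow ha.le hb.le, Real.rpow_sub hb, Real.rpow_one]
    have hne : f₂ κ ^ l ≠ 0 := (Real.rpow_pos_of_pos hb l).ne'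
    field_simp
  -- Young inequality forms
  have young1 : ∀ κ ∈ Γ, (1 : ℝ) ≤ l * (f₂ κ / f₁ κ) ^ (1 - l) + (1 - l) * (f₁ κ / f₂ κ) ^ l := by
    intro κ hκ
    have ha := h1p κ hκ; have hb := h2p κ hκ
    have hba : 0 < f₂ κ / f₁ κ := div_pos hb ha
    have hab : 0 < f₁ κ / f₂ κ := div_pos ha hb
    have h := Real.geom_mean_le_arith_mean2_weighted hl0.le hl1'.le
      (Real.rpow_pos_of_pos hba (1 - l)).le (Real.rpow_pos_of_pos hab l).le (by ring)
    have e : ((f₂ κ / f₁ κ) ^ (1 - l)) ^ l * ((f₁ κ / f₂ κ) ^ l) ^ (1 - l) = 1 := by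
      rw [← Real.rpow_mul hba.le, ← Real.rpow_mul hab.le,
        show f₁ κ / f₂ κ = (f₂ κ / f₁ κ)⁻¹ from (inv_div _ _).symm,
        Real.inv_rpow hba.le, ← Real.rpow_neg hba.le, ← Real.rpow_add hba,
        show (1 - l) * l + -(l * (1 - l)) = 0 by ring, Real.rpow_zero]
    linarith
  have young2 : ∀ κ ∈ Γ, f₁ κ ^ l * f₂ κ ^ (1 - l) ≤ l * f₁ κ + (1 - l) * f₂ κ := fun κ hκ =>
    Real.geom_mean_le_arith_mean2_weighted hl0.le hl1'.le (h1p κ hκ).le (h2p κ hκ).le (by ring)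
  -- first main sum bound
  have main1 : ∀ κ ∈ Γ,
      l * (f₂ κ / f₁ κ) ^ (1 - l) + (1 - l) * (f₁ κ / f₂ κ) ^ l
        ≤ ∑ i : Fin n, fderiv ℝ (fun x => f₁ x ^ l * f₂ x ^ (1 - l)) κ (Pi.single i 1) := by
    intro κ hκ
    have hsum : ∑ i : Fin n, fderiv ℝ (fun x => f₁ x ^ l * f₂ x ^ (1 - l)) κ (Pi.single i 1)
        = (l * (f₁ κ ^ l * f₂ κ ^ (1 - l)) / f₁ κ) * ∑ i : Fin n, fderiv ℝ f₁ κ (Pi.single i 1)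
          + ((1 - l) * (f₁ κ ^ l * f₂ κ ^ (1 - l)) / f₂ κ) * ∑ i : Fin n, fderiv ℝ f₂ κ (Pi.single i 1) := by
      rw [Finset.mul_sum, Finset.mul_sum, ← Finset.sum_add_distrib]
      exact Finset.sum_congr rfl fun i _ => keyv κ hκ _
    rw [hsum]
    have b1 : l * (f₁ κ ^ l * f₂ κ ^ (1 - l)) / f₁ κ
        ≤ (l * (f₁ κ ^ l * f₂ κ ^ (1 - l)) / f₁ κ) * ∑ i : Fin n, fderiv ℝ f₁ κ (Pi.single i 1) :=
      le_mul_of_one_le_right (hc1pos κ hκ).le (h1a κ hκ)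
    have b2 : (1 - l) * (f₁ κ ^ l * f₂ κ ^ (1 - l)) / f₂ κ
        ≤ ((1 - l) * (f₁ κ ^ l * f₂ κ ^ (1 - l)) / f₂ κ) * ∑ i : Fin n, fderiv ℝ f₂ κ (Pi.single i 1) :=
      le_mul_of_one_le_right (hc2pos κ hκ).le (h2a κ hκ)
    have e1 : l * (f₁ κ ^ l * f₂ κ ^ (1 - l)) / f₁ κ = l * (f₂ κ / f₁ κ) ^ (1 - l) := by
      rw [← id1 κ hκ]; ring
    have e2 : (1 - l) * (f₁ κ ^ l * f₂ κ ^ (1 - l)) / f₂ κ = (1 - l) * (f₁ κ / f₂ κ) ^ l := by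
      rw [← id2 κ hκ]; ring
    linarith
  -- second main sum bound
  have main2 : ∀ κ ∈ Γ,
      f₁ κ ^ l * f₂ κ ^ (1 - l) * (l * f₁ κ + (1 - l) * f₂ κ)
        ≤ ∑ i : Fin n, fderiv ℝ (fun x => f₁ x ^ l * f₂ x ^ (1 - l)) κ (Pi.single i 1) * (κ i) ^ 2 := by
    intro κ hκ
    have ha := h1p κ hκ; have hb := h2p κ hκ
    have hsum : ∑ i : Fin n, fderiv ℝ (fun x => f₁ x ^ l * f₂ x ^ (1 - l)) κ (Pi.single i 1) * (κ i) ^ 2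
        = (l * (f₁ κ ^ l * f₂ κ ^ (1 - l)) / f₁ κ) * ∑ i : Fin n, fderiv ℝ f₁ κ (Pi.single i 1) * (κ i) ^ 2
          + ((1 - l) * (f₁ κ ^ l * f₂ κ ^ (1 - l)) / f₂ κ) * ∑ i : Fin n, fderiv ℝ f₂ κ (Pi.single i 1) * (κ i) ^ 2 := by
      rw [Finset.mul_sum, Finset.mul_sum, ← Finset.sum_add_distrib]
      refine Finset.sum_congr rfl fun i _ => ?_
      rw [keyv κ hκ _]; ring
    rw [hsum]
    have b1 : (l * (f₁ κ ^ l * f₂ κ ^ (1 - l)) / f₁ κ) * (f₁ κ) ^ 2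
        ≤ (l * (f₁ κ ^ l * f₂ κ ^ (1 - l)) / f₁ κ) * ∑ i : Fin n, fderiv ℝ f₁ κ (Pi.single i 1) * (κ i) ^ 2 :=
      mul_le_mul_of_nonneg_left (h1b κ hκ) (hc1pos κ hκ).le
    have b2 : ((1 - l) * (f₁ κ ^ l * f₂ κ ^ (1 - l)) / f₂ κ) * (f₂ κ) ^ 2
        ≤ ((1 - l) * (f₁ κ ^ l * f₂ κ ^ (1 - l)) / f₂ κ) * ∑ i : Fin n, fderiv ℝ f₂ κ (Pi.single i 1) * (κ i) ^ 2 :=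
      mul_le_mul_of_nonneg_left (h2b κ hκ) (hc2pos κ hκ).le
    have e1 : (l * (f₁ κ ^ l * f₂ κ ^ (1 - l)) / f₁ κ) * (f₁ κ) ^ 2
        = f₁ κ ^ l * f₂ κ ^ (1 - l) * (l * f₁ κ) := by
      field_simp
    have e2 : ((1 - l) * (f₁ κ ^ l * f₂ κ ^ (1 - l)) / f₂ κ) * (f₂ κ) ^ 2
        = f₁ κ ^ l * f₂ κ ^ (1 - l) * ((1 - l) * f₂ κ) := by
      field_simp
    nlinarith [b1, b2, e1, e2]
  refine ⟨?_, fun κ hκ => ⟨main1 κ hκ, young1 κ hκ⟩, fun κ hκ => ⟨main2 κ hκ, ?_⟩⟩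
  · refine ⟨?_, fun κ hκ => hcpos κ hκ, ?_, ?_, ?_, ?_, ?_, ?_⟩
    · -- smoothness
      intro κ hκ
      have c1 := (h1s.contDiffAt (hopen.mem_nhds hκ)).rpow_const_of_ne (p := l) (h1p κ hκ).ne'
      have c2 := (h2s.contDiffAt (hopen.mem_nhds hκ)).rpow_const_of_ne (p := 1 - l) (h2p κ hκ).ne'
      exact (c1.mul c2).contDiffWithinAt
    · -- homogeneity
      intro s hs κ hκ
      simp only
      rw [h1h s hs κ hκ, h2h s hs κ hκ, Real.mul_rpow hs.le (h1p κ hκ).le,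
        Real.mul_rpow hs.le (h2p κ hκ).le, mul_mul_mul_comm, ← Real.rpow_add hs]
      norm_num
    · -- symmetry
      intro σ κ hκ
      simp only [h1sym σ κ hκ, h2sym σ κ hκ]
    · -- sum of derivatives ≥ 1
      intro κ hκ
      exact le_trans (young1 κ hκ) (main1 κ hκ)
    · -- weighted sum ≥ f²
      intro κ hκ
      refine le_trans ?_ (main2 κ hκ)
      show (f₁ κ ^ l * f₂ κ ^ (1 - l)) ^ 2 ≤ _
      have := young2 κ hκ
      nlinarith [hcpos κ hκ]
    · -- positivity of derivatives
      intro κ hκ i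
      rw [keyv κ hκ _]
      have := h1c κ hκ i; have := h2c κ hκ i
      have := hc1pos κ hκ; have := hc2pos κ hκ
      positivity
    · -- f - fᵢ κᵢ ≥ 0
      intro κ hκ i
      rw [keyv κ hκ _]
      have ha := h1p κ hκ; have hb := h2p κ hκ
      have d1 := h1d κ hκ i; have d2 := h2d κ hκ i
      have hc := hcpos κ hκ
      have e : f₁ κ ^ l * f₂ κ ^ (1 - l)
          - ((l * (f₁ κ ^ l * f₂ κ ^ (1 - l)) / f₁ κ) * fderiv ℝ f₁ κ (Pi.single i 1)
              + ((1 - l) * (f₁ κ ^ l * f₂ κ ^ (1 - l)) / f₂ κ) * fderiv ℝ f₂ κ (Pi.single i 1)) * κ i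
          = (l * (f₁ κ ^ l * f₂ κ ^ (1 - l)) / f₁ κ) * (f₁ κ - fderiv ℝ f₁ κ (Pi.single i 1) * κ i)
            + ((1 - l) * (f₁ κ ^ l * f₂ κ ^ (1 - l)) / f₂ κ) * (f₂ κ - fderiv ℝ f₂ κ (Pi.single i 1) * κ i) := by
        field_simp; ring
      rw [e]
      have := hc1pos κ hκ; have := hc2pos κ hκ
      positivity
  · -- f̃² ≤ f̃(lf₁+(1-l)f₂)
    have := young2 κ hκ
    nlinarith [hcpos κ hκ]
end
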